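/- arXiv:2403.07267 — 5 statements merged into one kernel-verified Lean document; each statement's English description precedes it below -/
import Mathlib

section
/- Stationarity of the proposed measure (Theorem 1, headway form): For every headway configuration ζ = (m, s), the master-equation balance holds: Σ_{i with m(i−1) ≥ 1} [ q̃_i(ζ₁ⁱ)·W(ζ₁ⁱ) + Q̃_i(ζ₂ⁱ)·W(ζ₂ⁱ) ] + Σ_i f̃_i(ζ₃ⁱ)·W(ζ₃ⁱ) = Σ_i ( q̃_i(ζ) + Q̃_i(ζ) + f̃_i(ζ) )·W(ζ). In other words, the weight W is an (unnormalized) invariant measure of the Markov jump dynamics defined by the rates q̃, Q̃, f̃. -/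
/-- Indicator that the gap ahead of particle `i` equals `r`. -/
noncomputable def theta {N : ℕ} (m : ZMod N → ℕ) (i : ZMod N) (r : ℕ) : ℝ :=
  if m i = r then 1 else 0

/-- Unnormalized stationary weight `W(ζ) = ∏ i, x^(s i − 3/2) · y^(−θ_i^0)`. -/
noncomputable def Wgt {N : ℕ} [NeZero N] (x y : ℝ) (m s : ZMod N → ℕ) : ℝ :=
  ∏ i : ZMod N, x ^ ((s i : ℝ) - 3 / 2) * y ^ (-(theta m i 0))

/-- Hopping rate of a state-1 particle. -/
noncomputable def qrate {N : ℕ} (qs q01 : ℝ) (m s : ZMod N → ℕ) (i : ZMod N) : ℝ :=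
  qs * (if s i = 1 then (1 : ℝ) else 0) * (1 + q01 * theta m i 1) * (1 - theta m i 0)

/-- Hopping rate of a state-2 particle. -/
noncomputable def Qrate {N : ℕ} (Qs Q01 : ℝ) (m s : ZMod N → ℕ) (i : ZMod N) : ℝ :=
  Qs * (if s i = 2 then (1 : ℝ) else 0) * (1 + Q01 * theta m i 1) * (1 - theta m i 0)

/-- Pheromone evaporation rate of particle `i`. -/
noncomputable def frate {N : ℕ} (fs f1s fs1 f10s fs01 : ℝ) (m s : ZMod N → ℕ)
    (i : ZMod N) : ℝ :=
  fs * (if s i = 2 then (1 : ℝ) else 0) *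
    (1 + f1s * theta m (i - 1) 0 + fs1 * theta m i 0 + f10s * theta m (i - 1) 1 +
      fs01 * theta m i 1)

/-- Gap vector of the pre-jump configuration: `m (i−1)` decreased by one, `m i` increased. -/
def mjump {N : ℕ} (m : ZMod N → ℕ) (i : ZMod N) : ZMod N → ℕ :=
  fun j => if j = i - 1 then m (i - 1) - 1 else if j = i then m i + 1 else m j

/-- State vector with the state of particle `i` flipped (`1 ↔ 2`). -/
def sflip {N : ℕ} (s : ZMod N → ℕ) (i : ZMod N) : ZMod N → ℕ :=
  Function.update s i (3 - s i)

private lemma prod_pair_aux {N : ℕ} [NeZero N] (f g : ZMod N → ℝ) (a b : ZMod N)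
    (hab : a ≠ b) (h : ∀ j, j ≠ a → j ≠ b → f j = g j) :
    (∏ j : ZMod N, f j) * (g a * g b) = (∏ j : ZMod N, g j) * (f a * f b) := by
  classical
  have hbmem : b ∈ Finset.univ.erase a := Finset.mem_erase.2 ⟨Ne.symm hab, Finset.mem_univ b⟩
  have key : ∀ F : ZMod N → ℝ,
      (∏ j : ZMod N, F j) = F a * (F b * ∏ j ∈ (Finset.univ.erase a).erase b, F j) := by
    intro F
    rw [← Finset.mul_prod_erase Finset.univ F (Finset.mem_univ a),
        ← Finset.mul_prod_erase _ F hbmem]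
  have hcong : ∏ j ∈ (Finset.univ.erase a).erase b, f j
      = ∏ j ∈ (Finset.univ.erase a).erase b, g j := by
    refine Finset.prod_congr rfl fun j hj => ?_
    simp only [Finset.mem_erase] at hj
    exact h j hj.2.1 hj.1
  rw [key f, key g, hcong]; ring

private lemma Wgt_pair_ratio {N : ℕ} [NeZero N] (x y : ℝ) (hx : 0 < x) (hy : 0 < y)
    (m m' s s' : ZMod N → ℕ) (a b : ZMod N) (hab : a ≠ b)
    (h : ∀ j, j ≠ a → j ≠ b → m' j = m j ∧ s' j = s j) :
    Wgt x y m' s' = Wgt x y m s *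
      (x ^ (((s' a : ℝ) + (s' b : ℝ)) - ((s a : ℝ) + (s b : ℝ))) *
       y ^ ((theta m a 0 + theta m b 0) - (theta m' a 0 + theta m' b 0))) := by
  have h' := prod_pair_aux
    (fun j => x ^ ((s' j : ℝ) - 3 / 2) * y ^ (-(theta m' j 0)))
    (fun j => x ^ ((s j : ℝ) - 3 / 2) * y ^ (-(theta m j 0))) a b hab
    (fun j h1 h2 => by
      simp only [theta, (h j h1 h2).1, (h j h1 h2).2])
  have hG : (x ^ ((s a : ℝ) - 3 / 2) * y ^ (-(theta m a 0)) *
      (x ^ ((s b : ℝ) - 3 / 2) * y ^ (-(theta m b 0)))) ≠ 0 := by positivity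
  have e1 : ∀ p q u v : ℝ, (x ^ p * y ^ q) * (x ^ u * y ^ v) = x ^ (p + u) * y ^ (q + v) := by
    intro p q u v
    rw [mul_mul_mul_comm, ← Real.rpow_add hx, ← Real.rpow_add hy]
  show Wgt x y m' s' = _
  unfold Wgt
  refine mul_right_cancel₀ hG ?_
  rw [h']
  have hcoef : (x ^ ((s' a : ℝ) - 3 / 2) * y ^ (-(theta m' a 0)) *
      (x ^ ((s' b : ℝ) - 3 / 2) * y ^ (-(theta m' b 0))))
      = (x ^ (((s' a : ℝ) + (s' b : ℝ)) - ((s a : ℝ) + (s b : ℝ))) *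
        y ^ ((theta m a 0 + theta m b 0) - (theta m' a 0 + theta m' b 0))) *
        (x ^ ((s a : ℝ) - 3 / 2) * y ^ (-(theta m a 0)) *
          (x ^ ((s b : ℝ) - 3 / 2) * y ^ (-(theta m b 0)))) := by
    rw [e1, e1, e1]
    congr 1 <;> congr 1 <;> ring
  calc (∏ j : ZMod N, x ^ ((s j : ℝ) - 3 / 2) * y ^ (-(theta m j 0))) *
        ((fun j => x ^ ((s' j : ℝ) - 3 / 2) * y ^ (-(theta m' j 0))) a *
         (fun j => x ^ ((s' j : ℝ) - 3 / 2) * y ^ (-(theta m' j 0))) b)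
      = (∏ j : ZMod N, x ^ ((s j : ℝ) - 3 / 2) * y ^ (-(theta m j 0))) *
        ((x ^ (((s' a : ℝ) + (s' b : ℝ)) - ((s a : ℝ) + (s b : ℝ))) *
          y ^ ((theta m a 0 + theta m b 0) - (theta m' a 0 + theta m' b 0))) *
         (x ^ ((s a : ℝ) - 3 / 2) * y ^ (-(theta m a 0)) *
          (x ^ ((s b : ℝ) - 3 / 2) * y ^ (-(theta m b 0))))) := by
        simp only []; rw [hcoef]
  _ = _ := by ring


set_option maxHeartbeats 4000000 in
/-- Theorem 1, headway form: the weight `W` is an (unnormalized)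
invariant measure of the Markov jump dynamics given by the rates `q̃, Q̃, f̃`. -/
theorem antTrail_stationarity
    (N : ℕ) [NeZero N] (hN : 3 ≤ N)
    (qs Qs fs q01 Q01 : ℝ)
    (hq : 0 < qs) (hQ : 0 < Qs) (hf : 0 < fs)
    (hq01 : -1 < q01) (hQ01 : -1 < Q01)
    (hpos : 0 < 1 + q01 + Qs / fs * (1 + Q01))
    (x y f1s fs1 f10s fs01 : ℝ)
    (hx : x = qs / fs)
    (hy : y = (1 + Qs / fs) / (1 + q01 + Qs / fs * (1 + Q01)))
    (hf1s : f1s = x / (1 + x) - x / (1 + x) * (Qs / qs) - 1)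
    (hfs1 : fs1 = 1 / (1 + x) + x / (1 + x) * (Qs / qs) - 1)
    (hf10s : f10s = 1 / (1 + x) * (1 + q01) + x / (1 + x) * (Qs / qs) * (1 + Q01)
      - 1 / (1 + x) - x / (1 + x) * (Qs / qs))
    (hfs01 : fs01 = x / (1 + x) * (1 + q01) - x / (1 + x) * (Qs / qs) * (1 + Q01)
      - x / (1 + x) + x / (1 + x) * (Qs / qs))
    (m s : ZMod N → ℕ) (hs : ∀ i, s i = 1 ∨ s i = 2) :
    (∑ i : ZMod N, if 1 ≤ m (i - 1) then
        qrate qs q01 (mjump m i) (sflip s i) i * Wgt x y (mjump m i) (sflip s i)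
          + Qrate Qs Q01 (mjump m i) s i * Wgt x y (mjump m i) s
      else 0)
      + ∑ i : ZMod N, frate fs f1s fs1 f10s fs01 m (sflip s i) i * Wgt x y m (sflip s i)
    = ∑ i : ZMod N,
        (qrate qs q01 m s i + Qrate Qs Q01 m s i + frate fs f1s fs1 f10s fs01 m s i)
          * Wgt x y m s := by
  classical
  have hx0 : 0 < x := by rw [hx]; positivity
  have hy0 : 0 < y := by rw [hy]; exact div_pos (by positivity) hpos
  haveI : Fact (1 < N) := ⟨by omega⟩
  have hone : (1 : ZMod N) ≠ 0 := one_ne_zero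
  have hfs0 : fs ≠ 0 := ne_of_gt hf
  have hqs0 : qs ≠ 0 := ne_of_gt hq
  have hQs0 : Qs ≠ 0 := ne_of_gt hQ
  have hD0 : 1 + q01 + Qs / fs * (1 + Q01) ≠ 0 := ne_of_gt hpos
  have h1Q : (1:ℝ) + Qs / fs ≠ 0 := by positivity
  have h1x : (1:ℝ) + qs / fs ≠ 0 := by positivity
  set v : ℕ → ℝ := fun n =>
    fs * x * (1 + f1s + (if n = 0 then fs1 else 0) + (if n = 1 then fs01 else 0))
      - qs * (1 + (if n = 1 then q01 else 0)) * (1 - (if n = 0 then (1:ℝ) else 0)) with hv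
  have hfq : fs + qs ≠ 0 := by positivity
  have hfQ : fs + Qs ≠ 0 := by positivity
  have hDpos : (0:ℝ) < fs * (1 + q01) + Qs * (1 + Q01) := by
    have h2 : fs * (1 + q01 + Qs / fs * (1 + Q01)) = fs * (1 + q01) + Qs * (1 + Q01) := by
      field_simp
    have h3 := mul_pos hf hpos
    rwa [h2] at h3
  have hD2 : fs * (1 + q01) + Qs * (1 + Q01) ≠ 0 := ne_of_gt hDpos
  have hD3 : q01 * fs + fs + Qs + Qs * Q01 ≠ 0 := by
    refine ne_of_gt ?_
    have h4 := hDpos; ring_nf at h4 ⊢; linarith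
  have hD4 : fs + fs * q01 + Qs + Qs * Q01 ≠ 0 := by
    refine ne_of_gt ?_
    have h4 := hDpos; ring_nf at h4 ⊢; linarith
  have hD5 : fs + q01 * fs + Qs + Qs * Q01 ≠ 0 := by
    refine ne_of_gt ?_
    have h4 := hDpos; ring_nf at h4 ⊢; linarith
  have hy2 : y = (fs + Qs) / (fs * (1 + q01) + Qs * (1 + Q01)) := by
    rw [hy, div_eq_div_iff hD0 hD2]; field_simp; try ring; try tauto
  have hxp : ∀ t : ℝ, x ^ (t + 2 - (t + 1)) = x := fun t => by
    rw [show t + 2 - (t + 1) = (1:ℝ) by ring, Real.rpow_one]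
  have hxm : ∀ t : ℝ, x ^ (t + 1 - (t + 2)) = x⁻¹ := fun t => by
    rw [show t + 1 - (t + 2) = (-1:ℝ) by ring, Real.rpow_neg_one]
  have key : ∀ i : ZMod N,
      (if 1 ≤ m (i - 1) then
        qrate qs q01 (mjump m i) (sflip s i) i * Wgt x y (mjump m i) (sflip s i)
          + Qrate Qs Q01 (mjump m i) s i * Wgt x y (mjump m i) s
      else 0)
      + frate fs f1s fs1 f10s fs01 m (sflip s i) i * Wgt x y m (sflip s i)
      = (qrate qs q01 m s i + Qrate Qs Q01 m s i + frate fs f1s fs1 f10s fs01 m s i)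
          * Wgt x y m s + (v (m i) - v (m (i - 1))) * Wgt x y m s := by
    intro i
    have hne : i - 1 ≠ i := fun hcon => hone (by rwa [sub_eq_self] at hcon)
    have hnes : i ≠ i - 1 := Ne.symm hne
    have hsfa : sflip s i (i - 1) = s (i - 1) := Function.update_of_ne hne _ _
    have hsfb : sflip s i i = 3 - s i := Function.update_self _ _ _
    have hmja : mjump m i (i - 1) = m (i - 1) - 1 := by simp [mjump]
    have hmjb : mjump m i i = m i + 1 := by simp [mjump, hnes]
    have hC := Wgt_pair_ratio x y hx0 hy0 m m s (sflip s i) (i - 1) i hne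
      (fun j h1 h2 => ⟨rfl, Function.update_of_ne h2 _ _⟩)
    rcases hs i with hc | hc <;> rcases hma : m (i - 1) with _ | ma
    case _ =>
      rw [if_neg (by omega), hC]
      rcases hmb : m i with _ | _ | mb <;>
      · simp [qrate, Qrate, frate, theta, hsfa, hsfb, hmja, hmjb, hc, hma, hmb, hv,
          hxp, hxm, Real.rpow_one, Real.rpow_zero, Real.rpow_neg_one, -mul_eq_zero]
        try norm_num [Real.rpow_one, Real.rpow_zero, Real.rpow_neg_one, -mul_eq_zero]
        try simp only [hf1s, hfs1, hf10s, hfs01, hy2, hx]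
        try field_simp
        try ring
        try tauto
    case _ =>
      have hA := Wgt_pair_ratio x y hx0 hy0 m (mjump m i) s (sflip s i) (i - 1) i hne
        (fun j h1 h2 => ⟨by simp [mjump, h1, h2], Function.update_of_ne h2 _ _⟩)
      have hB := Wgt_pair_ratio x y hx0 hy0 m (mjump m i) s s (i - 1) i hne
        (fun j h1 h2 => ⟨by simp [mjump, h1, h2], rfl⟩)
      rw [if_pos (by omega), hA, hB, hC]
      rcases ma with _ | ma <;> rcases hmb : m i with _ | _ | mb <;>
      · simp [qrate, Qrate, frate, theta, hsfa, hsfb, hmja, hmjb, hc, hma, hmb, hv,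
          hxp, hxm, Real.rpow_one, Real.rpow_zero, Real.rpow_neg_one, -mul_eq_zero]
        try norm_num [Real.rpow_one, Real.rpow_zero, Real.rpow_neg_one, -mul_eq_zero]
        try simp only [hf1s, hfs1, hf10s, hfs01, hy2, hx]
        try field_simp
        try ring
        try tauto
    case _ =>
      rw [if_neg (by omega), hC]
      rcases hmb : m i with _ | _ | mb <;>
      · simp [qrate, Qrate, frate, theta, hsfa, hsfb, hmja, hmjb, hc, hma, hmb, hv,
          hxp, hxm, Real.rpow_one, Real.rpow_zero, Real.rpow_neg_one, -mul_eq_zero]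
        try norm_num [Real.rpow_one, Real.rpow_zero, Real.rpow_neg_one, -mul_eq_zero]
        try simp only [hf1s, hfs1, hf10s, hfs01, hy2, hx]
        try field_simp
        try ring
        try tauto
    case _ =>
      have hA := Wgt_pair_ratio x y hx0 hy0 m (mjump m i) s (sflip s i) (i - 1) i hne
        (fun j h1 h2 => ⟨by simp [mjump, h1, h2], Function.update_of_ne h2 _ _⟩)
      have hB := Wgt_pair_ratio x y hx0 hy0 m (mjump m i) s s (i - 1) i hne
        (fun j h1 h2 => ⟨by simp [mjump, h1, h2], rfl⟩)
      rw [if_pos (by omega), hA, hB, hC]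
      rcases ma with _ | ma <;> rcases hmb : m i with _ | _ | mb <;>
      · simp [qrate, Qrate, frate, theta, hsfa, hsfb, hmja, hmjb, hc, hma, hmb, hv,
          hxp, hxm, Real.rpow_one, Real.rpow_zero, Real.rpow_neg_one, -mul_eq_zero]
        try norm_num [Real.rpow_one, Real.rpow_zero, Real.rpow_neg_one, -mul_eq_zero]
        try simp only [hf1s, hfs1, hf10s, hfs01, hy2, hx]
        try field_simp
        try ring
        try tauto
        try linear_combination (Wgt (qs * fs⁻¹) (fs * (fs + fs * q01 + Qs + Qs * Q01)⁻¹ + Qs * (fs + fs * q01 + Qs + Qs * Q01)⁻¹) m s * (fs + qs) * (fs + Qs)) * mul_inv_cancel₀ hD4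
  have htel : ∑ i : ZMod N, (v (m i) - v (m (i - 1))) * Wgt x y m s = 0 := by
    rw [← Finset.sum_mul]
    have h2 : ∑ i : ZMod N, (v (m i) - v (m (i - 1))) = 0 := by
      rw [Finset.sum_sub_distrib, sub_eq_zero]
      exact Fintype.sum_equiv (Equiv.addRight (1 : ZMod N)) _ _
        (fun i => by simp)
    rw [h2, zero_mul]
  calc (∑ i : ZMod N, if 1 ≤ m (i - 1) then
        qrate qs q01 (mjump m i) (sflip s i) i * Wgt x y (mjump m i) (sflip s i)
          + Qrate Qs Q01 (mjump m i) s i * Wgt x y (mjump m i) s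
      else 0)
      + ∑ i : ZMod N, frate fs f1s fs1 f10s fs01 m (sflip s i) i * Wgt x y m (sflip s i)
      = ∑ i : ZMod N, ((if 1 ≤ m (i - 1) then
          qrate qs q01 (mjump m i) (sflip s i) i * Wgt x y (mjump m i) (sflip s i)
            + Qrate Qs Q01 (mjump m i) s i * Wgt x y (mjump m i) s
        else 0)
        + frate fs f1s fs1 f10s fs01 m (sflip s i) i * Wgt x y m (sflip s i)) := by
        rw [← Finset.sum_add_distrib]
    _ = ∑ i : ZMod N,
        ((qrate qs q01 m s i + Qrate Qs Q01 m s i + frate fs f1s fs1 f10s fs01 m s i)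
          * Wgt x y m s + (v (m i) - v (m (i - 1))) * Wgt x y m s) :=
        Finset.sum_congr rfl fun i _ => key i
    _ = (∑ i : ZMod N,
        (qrate qs q01 m s i + Qrate Qs Q01 m s i + frate fs f1s fs1 f10s fs01 m s i)
          * Wgt x y m s) + ∑ i : ZMod N, (v (m i) - v (m (i - 1))) * Wgt x y m s :=
        Finset.sum_add_distrib
    _ = _ := by rw [htel, add_zero]
end

section
/- Local lattice-divergence (discrete Noether) relation: define b = −(q⋆ + x·Q⋆)/(1+x) and c = (q⋆·q⋆01 + x·Q⋆·Q⋆01)/(1+x), and for a headway configuration ζ set Φ_j(ζ) = b·θ_j^0 + c·θ_j^1. Define D̃_i(ζ) = [m(i−1) ≥ 1]·q̃_i(ζ₁ⁱ)·W(ζ₁ⁱ)/W(ζ) − q̃_i(ζ), Ẽ_i(ζ) = [m(i−1) ≥ 1]·Q̃_i(ζ₂ⁱ)·W(ζ₂ⁱ)/W(ζ) − Q̃_i(ζ), F̃_i(ζ) = f̃_i(ζ₃ⁱ)·W(ζ₃ⁱ)/W(ζ) − f̃_i(ζ). Then for every headway configuration ζ and every index i: D̃_i(ζ) + Ẽ_i(ζ)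 + F̃_i(ζ) = Φ_{i−1}(ζ) − Φ_i(ζ). -/
/-- `D̃_i(ζ) = [m(i−1) ≥ 1]·q̃_i(ζ₁ⁱ)·W(ζ₁ⁱ)/W(ζ) − q̃_i(ζ)`. -/
noncomputable def Dtil {N : ℕ} [NeZero N] (qs q01 x y : ℝ) (m s : ZMod N → ℕ)
    (i : ZMod N) : ℝ :=
  (if 1 ≤ m (i - 1) then (1 : ℝ) else 0) *
      (qrate qs q01 (mjump m i) (sflip s i) i * Wgt x y (mjump m i) (sflip s i)
        / Wgt x y m s)
    - qrate qs q01 m s i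

/-- `Ẽ_i(ζ) = [m(i−1) ≥ 1]·Q̃_i(ζ₂ⁱ)·W(ζ₂ⁱ)/W(ζ) − Q̃_i(ζ)`. -/
noncomputable def Etil {N : ℕ} [NeZero N] (Qs Q01 x y : ℝ) (m s : ZMod N → ℕ)
    (i : ZMod N) : ℝ :=
  (if 1 ≤ m (i - 1) then (1 : ℝ) else 0) *
      (Qrate Qs Q01 (mjump m i) s i * Wgt x y (mjump m i) s / Wgt x y m s)
    - Qrate Qs Q01 m s i

/-- `F̃_i(ζ) = f̃_i(ζ₃ⁱ)·W(ζ₃ⁱ)/W(ζ) − f̃_i(ζ)`. -/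
noncomputable def Ftil {N : ℕ} [NeZero N] (fs f1s fs1 f10s fs01 x y : ℝ)
    (m s : ZMod N → ℕ) (i : ZMod N) : ℝ :=
  frate fs f1s fs1 f10s fs01 m (sflip s i) i * Wgt x y m (sflip s i) / Wgt x y m s
    - frate fs f1s fs1 f10s fs01 m s i

private lemma prod_eq_off_one {α : Type*} [Fintype α] [DecidableEq α] (f g : α → ℝ) (a : α)
    (h : ∀ j, j ≠ a → g j = f j) :
    (∏ j, g j) * f a = (∏ j, f j) * g a := by
  rw [← Finset.mul_prod_erase _ g (Finset.mem_univ a),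
      ← Finset.mul_prod_erase _ f (Finset.mem_univ a),
      Finset.prod_congr rfl fun j hj => h j (Finset.ne_of_mem_erase hj)]
  ring

private lemma prod_eq_off_two {α : Type*} [Fintype α] [DecidableEq α] (f g : α → ℝ) (a b : α)
    (hab : a ≠ b) (h : ∀ j, j ≠ a → j ≠ b → g j = f j) :
    (∏ j, g j) * (f a * f b) = (∏ j, f j) * (g a * g b) := by
  have hb : b ∈ Finset.univ.erase a := Finset.mem_erase.2 ⟨hab.symm, Finset.mem_univ b⟩
  rw [← Finset.mul_prod_erase _ g (Finset.mem_univ a),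
      ← Finset.mul_prod_erase _ g hb,
      ← Finset.mul_prod_erase _ f (Finset.mem_univ a),
      ← Finset.mul_prod_erase _ f hb,
      Finset.prod_congr rfl fun j hj => by
        have h1 := Finset.mem_erase.1 hj
        have h2 := Finset.mem_erase.1 h1.2
        exact h j h2.1 h1.1]
  ring

private lemma Wgt_pos {N : ℕ} [NeZero N] {x y : ℝ} (hx : 0 < x) (hy : 0 < y)
    (m s : ZMod N → ℕ) : 0 < Wgt x y m s :=
  Finset.prod_pos fun j _ => mul_pos (Real.rpow_pos_of_pos hx _) (Real.rpow_pos_of_pos hy _)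

private lemma Wgt_sflip {N : ℕ} [NeZero N] {x y : ℝ} (hx : 0 < x) (hy : 0 < y)
    (m s : ZMod N → ℕ) (i : ZMod N) (hsi : s i = 1 ∨ s i = 2) :
    Wgt x y m (sflip s i) = (if s i = 1 then x else x⁻¹) * Wgt x y m s := by
  have h := prod_eq_off_one (fun j => x ^ ((s j : ℝ) - 3 / 2) * y ^ (-(theta m j 0)))
    (fun j => x ^ ((sflip s i j : ℝ) - 3 / 2) * y ^ (-(theta m j 0))) i
    (fun j hj => by simp [sflip, Function.update_of_ne hj])
  beta_reduce at h
  have hY : (0:ℝ) < y ^ (-(theta m i 0)) := Real.rpow_pos_of_pos hy _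
  have hflip : sflip s i i = 3 - s i := Function.update_self _ _ _
  rcases hsi with h1 | h2
  · rw [if_pos h1]
    have hg : ((sflip s i i : ℕ) : ℝ) = 2 := by rw [hflip, h1]; norm_num
    rw [hg, h1] at h
    have e2 : x ^ ((2:ℝ) - 3 / 2) = x * x ^ (((1:ℕ):ℝ) - 3 / 2) := by
      rw [show ((2:ℝ) - 3/2) = 1 + (((1:ℕ):ℝ) - 3/2) by push_cast; ring,
        Real.rpow_add hx, Real.rpow_one]
    rw [e2] at h
    have hne : x ^ (((1:ℕ):ℝ) - 3 / 2) * y ^ (-(theta m i 0)) ≠ 0 :=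
      ne_of_gt (mul_pos (Real.rpow_pos_of_pos hx _) hY)
    apply mul_right_cancel₀ hne
    rw [show Wgt x y m (sflip s i) = ∏ j, x ^ ((sflip s i j : ℝ) - 3 / 2) * y ^ (-(theta m j 0)) from rfl,
      show Wgt x y m s = ∏ j, x ^ ((s j : ℝ) - 3 / 2) * y ^ (-(theta m j 0)) from rfl]
    linear_combination h
  · rw [h2, if_neg (by norm_num)]
    have hg : ((sflip s i i : ℕ) : ℝ) = 1 := by rw [hflip, h2]; norm_num
    rw [hg, h2] at h
    have e2 : x ^ ((1:ℝ) - 3 / 2) = x⁻¹ * x ^ (((2:ℕ):ℝ) - 3 / 2) := by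
      rw [show ((1:ℝ) - 3/2) = -1 + (((2:ℕ):ℝ) - 3/2) by push_cast; ring,
        Real.rpow_add hx, Real.rpow_neg_one]
    rw [e2] at h
    have hne : x ^ (((2:ℕ):ℝ) - 3 / 2) * y ^ (-(theta m i 0)) ≠ 0 :=
      ne_of_gt (mul_pos (Real.rpow_pos_of_pos hx _) hY)
    apply mul_right_cancel₀ hne
    rw [show Wgt x y m (sflip s i) = ∏ j, x ^ ((sflip s i j : ℝ) - 3 / 2) * y ^ (-(theta m j 0)) from rfl,
      show Wgt x y m s = ∏ j, x ^ ((s j : ℝ) - 3 / 2) * y ^ (-(theta m j 0)) from rfl]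
    linear_combination h

private lemma Wgt_mjump {N : ℕ} [NeZero N] {x y : ℝ} (hx : 0 < x) (hy : 0 < y)
    (m s : ZMod N → ℕ) (i : ZMod N) (hii : i - 1 ≠ i) (hm : 1 ≤ m (i - 1)) :
    Wgt x y (mjump m i) s = y ^ (theta m i 0 - theta m (i - 1) 1) * Wgt x y m s := by
  have h := prod_eq_off_two (fun j => x ^ ((s j : ℝ) - 3 / 2) * y ^ (-(theta m j 0)))
    (fun j => x ^ ((s j : ℝ) - 3 / 2) * y ^ (-(theta (mjump m i) j 0))) (i - 1) i hii
    (fun j hj1 hj2 => by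
      have : mjump m i j = m j := by rw [mjump]; simp [hj1, hj2]
      simp only [theta, this])
  beta_reduce at h
  have hA : theta (mjump m i) (i - 1) 0 = theta m (i - 1) 1 := by
    simp only [theta, show mjump m i (i - 1) = m (i - 1) - 1 from by simp [mjump]]
    split_ifs with h1 h2 h3 <;> first | rfl | omega
  have hB : theta (mjump m i) i 0 = 0 := by
    simp only [theta, show mjump m i i = m i + 1 from by simp [mjump, hii.symm]]
    rw [if_neg (by omega)]
  have hC : theta m (i - 1) 0 = 0 := by simp only [theta]; rw [if_neg (by omega)]
  rw [hA, hB, hC] at h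
  have e : y ^ (-(theta m (i - 1) 1)) =
      y ^ (theta m i 0 - theta m (i - 1) 1) * y ^ (-(theta m i 0)) := by
    rw [← Real.rpow_add hy]; ring_nf
  rw [e] at h
  have hne : (x ^ ((s (i-1) : ℝ) - 3 / 2) * y ^ (-(0:ℝ))) *
      (x ^ ((s i : ℝ) - 3 / 2) * y ^ (-(theta m i 0))) ≠ 0 :=
    ne_of_gt (mul_pos (mul_pos (Real.rpow_pos_of_pos hx _) (Real.rpow_pos_of_pos hy _))
      (mul_pos (Real.rpow_pos_of_pos hx _) (Real.rpow_pos_of_pos hy _)))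
  apply mul_right_cancel₀ hne
  rw [show Wgt x y (mjump m i) s = ∏ j, x ^ ((s j : ℝ) - 3 / 2) * y ^ (-(theta (mjump m i) j 0)) from rfl,
    show Wgt x y m s = ∏ j, x ^ ((s j : ℝ) - 3 / 2) * y ^ (-(theta m j 0)) from rfl]
  linear_combination h

set_option maxHeartbeats 2000000 in
/-- the local lattice-divergence (discrete Noether) relation
`D̃_i + Ẽ_i + F̃_i = Φ_{i−1} − Φ_i` with `Φ_j = b·θ_j^0 + c·θ_j^1`. -/
theorem antTrail_local_divergence
    (N : ℕ) [NeZero N] (hN : 3 ≤ N)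
    (qs Qs fs q01 Q01 : ℝ)
    (hq : 0 < qs) (hQ : 0 < Qs) (hf : 0 < fs)
    (hq01 : -1 < q01) (hQ01 : -1 < Q01)
    (hpos : 0 < 1 + q01 + Qs / fs * (1 + Q01))
    (x y f1s fs1 f10s fs01 : ℝ)
    (hx : x = qs / fs)
    (hy : y = (1 + Qs / fs) / (1 + q01 + Qs / fs * (1 + Q01)))
    (hf1s : f1s = x / (1 + x) - x / (1 + x) * (Qs / qs) - 1)
    (hfs1 : fs1 = 1 / (1 + x) + x / (1 + x) * (Qs / qs) - 1)
    (hf10s : f10s = 1 / (1 + x) * (1 + q01) + x / (1 + x) * (Qs / qs) * (1 + Q01)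
      - 1 / (1 + x) - x / (1 + x) * (Qs / qs))
    (hfs01 : fs01 = x / (1 + x) * (1 + q01) - x / (1 + x) * (Qs / qs) * (1 + Q01)
      - x / (1 + x) + x / (1 + x) * (Qs / qs))
    (b c : ℝ)
    (hb : b = -(qs + x * Qs) / (1 + x))
    (hc : c = (qs * q01 + x * Qs * Q01) / (1 + x))
    (m s : ZMod N → ℕ) (hs : ∀ i, s i = 1 ∨ s i = 2) (i : ZMod N) :
    Dtil qs q01 x y m s i + Etil Qs Q01 x y m s i
        + Ftil fs f1s fs1 f10s fs01 x y m s i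
      = (b * theta m (i - 1) 0 + c * theta m (i - 1) 1)
        - (b * theta m i 0 + c * theta m i 1) := by
  subst hf1s hfs1 hf10s hfs01 hb hc hy hx
  haveI : Fact (1 < N) := ⟨by omega⟩
  have hii : i - 1 ≠ i := by
    intro h
    exact one_ne_zero (sub_eq_self.mp h)
  have hx0 : (0:ℝ) < qs / fs := by positivity
  have hy0 : (0:ℝ) < (1 + Qs / fs) / (1 + q01 + Qs / fs * (1 + Q01)) :=
    div_pos (by positivity) hpos
  have hWne : Wgt (qs / fs) ((1 + Qs / fs) / (1 + q01 + Qs / fs * (1 + Q01))) m s ≠ 0 :=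
    ne_of_gt (Wgt_pos hx0 hy0 m s)
  have hmji : mjump m i i = m i + 1 := by simp [mjump, hii.symm]
  have htj1 : theta (mjump m i) i 1 = theta m i 0 := by
    simp only [theta, hmji]; split_ifs <;> first | rfl | omega
  have htj0 : theta (mjump m i) i 0 = 0 := by
    simp only [theta, hmji]; rw [if_neg (by omega)]
  have e3 := Wgt_sflip hx0 hy0 m s i (hs i)
  have hfs : fs ≠ 0 := ne_of_gt hf
  have hqs : qs ≠ 0 := ne_of_gt hq
  have h1x : (1:ℝ) + qs / fs ≠ 0 := by positivity
  have hden : (1:ℝ) + q01 + Qs / fs * (1 + Q01) ≠ 0 := ne_of_gt hpos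
  have hnum : (1:ℝ) + Qs / fs ≠ 0 := by positivity
  have hkey : (0:ℝ) < fs + fs * q01 + Qs + Qs * Q01 := by
    have h := mul_pos hf hpos
    have e : fs * (1 + q01 + Qs / fs * (1 + Q01)) = fs + fs * q01 + Qs + Qs * Q01 := by
      field_simp; ring
    linarith [e ▸ h]
  have n1 : fs + fs * q01 + Qs + Qs * Q01 ≠ 0 := ne_of_gt hkey
  have n2 : q01 * fs + fs + Qs + Qs * Q01 ≠ 0 := fun h => n1 (by linarith)
  have n3 : qs * q01 * fs + qs * fs + qs * Qs + qs * Qs * Q01 ≠ 0 := by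
    rw [show qs * q01 * fs + qs * fs + qs * Qs + qs * Qs * Q01
        = qs * (fs + fs * q01 + Qs + Qs * Q01) from by ring]
    exact mul_ne_zero hqs n1
  have n5 : (1 + q01) * fs + Qs * (1 + Q01) ≠ 0 := fun h => n1 (by linarith)
  have n4 : qs * fs + qs * fs * q01 + qs * Qs + qs * Qs * Q01 ≠ 0 := by
    rw [show qs * fs + qs * fs * q01 + qs * Qs + qs * Qs * Q01
        = qs * (fs + fs * q01 + Qs + Qs * Q01) from by ring]
    exact mul_ne_zero hqs n1
  have hcan3 : ∀ a r t : ℝ,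
      a * (r * (t * Wgt (qs / fs) ((1 + Qs / fs) / (1 + q01 + Qs / fs * (1 + Q01))) m s))
        / Wgt (qs / fs) ((1 + Qs / fs) / (1 + q01 + Qs / fs * (1 + Q01))) m s
      = a * (r * t) := by
    intro a r t
    rw [show a * (r * (t * Wgt (qs / fs) ((1 + Qs / fs) / (1 + q01 + Qs / fs * (1 + Q01))) m s))
        = (a * (r * t)) * Wgt (qs / fs) ((1 + Qs / fs) / (1 + q01 + Qs / fs * (1 + Q01))) m s
        from by ring, mul_div_assoc, div_self hWne, mul_one]
  have hcan2 : ∀ a r : ℝ,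
      a * (r * Wgt (qs / fs) ((1 + Qs / fs) / (1 + q01 + Qs / fs * (1 + Q01))) m s)
        / Wgt (qs / fs) ((1 + Qs / fs) / (1 + q01 + Qs / fs * (1 + Q01))) m s
      = a * r := by
    intro a r
    rw [show a * (r * Wgt (qs / fs) ((1 + Qs / fs) / (1 + q01 + Qs / fs * (1 + Q01))) m s)
        = (a * r) * Wgt (qs / fs) ((1 + Qs / fs) / (1 + q01 + Qs / fs * (1 + Q01))) m s
        from by ring, mul_div_assoc, div_self hWne, mul_one]
  simp only [Dtil, Etil, Ftil, e3]
  by_cases hm : 1 ≤ m (i - 1)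
  · rw [Wgt_mjump hx0 hy0 m (sflip s i) i hii hm, Wgt_mjump hx0 hy0 m s i hii hm,
      e3, if_pos hm]
    simp only [hcan3, hcan2]
    rcases hs i with hsi | hsi <;>
      simp only [qrate, Qrate, frate, sflip, Function.update_self, htj1, htj0, hsi] <;>
      simp only [theta] <;>
      norm_num <;>
      split_ifs <;>
      first
        | (exfalso; omega)
        | (norm_num [Real.rpow_neg_one] <;>
            (try field_simp [n1, n2, n3, n4, n5]) <;> (try ring) <;> (try tauto))
  · rw [if_neg hm]
    simp only [hcan3, hcan2, zero_mul]
    have hm0 : m (i - 1) = 0 := by omega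
    rcases hs i with hsi | hsi <;>
      simp only [zero_mul, qrate, Qrate, frate, sflip, Function.update_self, hsi, hm0] <;>
      simp only [theta] <;>
      norm_num <;>
      split_ifs <;>
      first
        | (exfalso; omega)
        | (norm_num [Real.rpow_neg_one] <;>
            (try field_simp [n1, n2, n3, n4, n5]) <;> (try ring) <;> (try tauto))
end

section
/- Necessity of the stationary conditions: fix N ≥ 5, parameters q⋆, Q⋆, f⋆ > 0, q⋆01, Q⋆01 > −1, real parameters f1⋆, f⋆1, f10⋆, f⋆01, and measure parameters x, y > 0, and suppose there exist real numbers a, b, c such that, with Φ_j(ζ) = a + b·θ_j^0 + c·θ_j^1, the relation D̃_i(ζ) + Ẽ_i(ζ) + F̃_i(ζ) = Φ_{i−1}(ζ) − Φ_i(ζ) holds for every headway configuration ζ and every index i. Then necessarily x = q⋆/f⋆, y = (1 + Q⋆/f⋆)/(1 + q⋆01 + (Q⋆/f⋆)(1 + Q⋆01)), f1⋆ = x/(1+x) − (x/(1+x))·(Q⋆/q⋆) − 1, f⋆1 = 1/(1+x) + (x/(1+x))·(Q⋆/q⋆) − 1, f10⋆ = (1/(1+x))·(1+q⋆01) + (x/(1+x))·(Q⋆/q⋆)·(1+Q⋆01)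 − 1/(1+x) − (x/(1+x))·(Q⋆/q⋆), f⋆01 = (x/(1+x))·(1+q⋆01) − (x/(1+x))·(Q⋆/q⋆)·(1+Q⋆01) − x/(1+x) + (x/(1+x))·(Q⋆/q⋆), and moreover b = −(q⋆ + x·Q⋆)/(1+x) and c = (q⋆·q⋆01 + x·Q⋆·Q⋆01)/(1+x). -/
lemma Wgt_ratio {N : ℕ} [NeZero N] {x y : ℝ} (hx : 0 < x) (hy : 0 < y)
    {i : ZMod N} (hi : i - 1 ≠ i) (m m' s s' : ZMod N → ℕ)
    (h : ∀ j, j ≠ i - 1 → j ≠ i → m' j = m j ∧ s' j = s j) :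
    Wgt x y m' s' / Wgt x y m s =
      (x ^ ((s' (i-1) : ℝ) - 3/2) * y ^ (-(theta m' (i-1) 0)))
        / (x ^ ((s (i-1) : ℝ) - 3/2) * y ^ (-(theta m (i-1) 0)))
      * ((x ^ ((s' i : ℝ) - 3/2) * y ^ (-(theta m' i 0)))
        / (x ^ ((s i : ℝ) - 3/2) * y ^ (-(theta m i 0)))) := by
  unfold Wgt
  rw [← Finset.prod_div_distrib]
  rw [← Finset.prod_subset (Finset.subset_univ ({i-1, i} : Finset (ZMod N)))
    (by
      intro j _ hj
      simp only [Finset.mem_insert, Finset.mem_singleton, not_or] at hj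
      obtain ⟨h1, h2⟩ := h j hj.1 hj.2
      rw [h2, show theta m' j 0 = theta m j 0 by simp [theta, h1]]
      exact div_self (by positivity))]
  rw [Finset.prod_pair hi]

lemma fac_ratio {x y : ℝ} (hx : 0 < x) (hy : 0 < y) (a b c d : ℝ) :
    (x ^ a * y ^ b) / (x ^ c * y ^ d) = x ^ (a - c) * y ^ (b - d) := by
  rw [Real.rpow_sub hx, Real.rpow_sub hy, div_mul_div_comm]

lemma ratio_mjump_sflip {N : ℕ} [NeZero N] {x y : ℝ} (hx : 0 < x) (hy : 0 < y)
    {i : ZMod N} (hi : i - 1 ≠ i) (m s : ZMod N → ℕ) :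
    Wgt x y (mjump m i) (sflip s i) / Wgt x y m s =
      x ^ (((3 - s i : ℕ) : ℝ) - (s i : ℝ)) *
        y ^ (theta m (i-1) 0 - theta (mjump m i) (i-1) 0) *
        y ^ (theta m i 0 - theta (mjump m i) i 0) := by
  rw [Wgt_ratio hx hy hi m (mjump m i) s (sflip s i)
    (fun j h1 h2 => ⟨by simp [mjump, h1, h2], Function.update_of_ne h2 _ _⟩)]
  rw [show sflip s i (i-1) = s (i-1) from Function.update_of_ne hi _ _,
    show sflip s i i = 3 - s i from Function.update_self _ _ _,
    fac_ratio hx hy, fac_ratio hx hy]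
  rw [show (s (i-1) : ℝ) - 3/2 - ((s (i-1) : ℝ) - 3/2) = 0 by ring, Real.rpow_zero,
    show -(theta (mjump m i) (i-1) 0) - -(theta m (i-1) 0)
      = theta m (i-1) 0 - theta (mjump m i) (i-1) 0 by ring,
    show ((3 - s i : ℕ) : ℝ) - 3/2 - ((s i : ℝ) - 3/2) = ((3 - s i : ℕ) : ℝ) - s i by ring,
    show -(theta (mjump m i) i 0) - -(theta m i 0)
      = theta m i 0 - theta (mjump m i) i 0 by ring]
  ring

lemma ratio_mjump {N : ℕ} [NeZero N] {x y : ℝ} (hx : 0 < x) (hy : 0 < y)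
    {i : ZMod N} (hi : i - 1 ≠ i) (m s : ZMod N → ℕ) :
    Wgt x y (mjump m i) s / Wgt x y m s =
      y ^ (theta m (i-1) 0 - theta (mjump m i) (i-1) 0) *
        y ^ (theta m i 0 - theta (mjump m i) i 0) := by
  rw [Wgt_ratio hx hy hi m (mjump m i) s s
    (fun j h1 h2 => ⟨by simp [mjump, h1, h2], rfl⟩)]
  rw [fac_ratio hx hy, fac_ratio hx hy]
  rw [show (s (i-1) : ℝ) - 3/2 - ((s (i-1) : ℝ) - 3/2) = 0 by ring, Real.rpow_zero,
    show (s i : ℝ) - 3/2 - ((s i : ℝ) - 3/2) = 0 by ring, Real.rpow_zero,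
    show -(theta (mjump m i) (i-1) 0) - -(theta m (i-1) 0)
      = theta m (i-1) 0 - theta (mjump m i) (i-1) 0 by ring,
    show -(theta (mjump m i) i 0) - -(theta m i 0)
      = theta m i 0 - theta (mjump m i) i 0 by ring]
  ring

lemma ratio_sflip {N : ℕ} [NeZero N] {x y : ℝ} (hx : 0 < x) (hy : 0 < y)
    {i : ZMod N} (hi : i - 1 ≠ i) (m s : ZMod N → ℕ) :
    Wgt x y m (sflip s i) / Wgt x y m s =
      x ^ (((3 - s i : ℕ) : ℝ) - (s i : ℝ)) := by
  rw [Wgt_ratio hx hy hi m m s (sflip s i)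
    (fun j h1 h2 => ⟨rfl, Function.update_of_ne h2 _ _⟩)]
  rw [show sflip s i (i-1) = s (i-1) from Function.update_of_ne hi _ _,
    show sflip s i i = 3 - s i from Function.update_self _ _ _,
    fac_ratio hx hy, fac_ratio hx hy]
  rw [show (s (i-1) : ℝ) - 3/2 - ((s (i-1) : ℝ) - 3/2) = 0 by ring, Real.rpow_zero,
    show -(theta m (i-1) 0) - -(theta m (i-1) 0) = 0 by ring, Real.rpow_zero,
    show ((3 - s i : ℕ) : ℝ) - 3/2 - ((s i : ℝ) - 3/2) = ((3 - s i : ℕ) : ℝ) - s i by ring,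
    show -(theta m i 0) - -(theta m i 0) = 0 by ring, Real.rpow_zero]
  ring

/-- necessity of the stationary conditions. If the local
lattice-divergence relation holds for all headway configurations with some
`Φ_j = a + b·θ_j^0 + c·θ_j^1`, then the parameters must satisfy the stationary
constraints (13)–(18), and `b`, `c` are forced as well. -/
theorem antTrail_stationary_conditions_necessary
    (N : ℕ) [NeZero N] (hN : 5 ≤ N)
    (qs Qs fs q01 Q01 : ℝ)
    (hq : 0 < qs) (hQ : 0 < Qs) (hf : 0 < fs)
    (hq01 : -1 < q01) (hQ01 : -1 < Q01)
    (f1s fs1 f10s fs01 : ℝ)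
    (x y : ℝ) (hx : 0 < x) (hy : 0 < y)
    (a b c : ℝ)
    (hdiv : ∀ (m s : ZMod N → ℕ), (∀ j, s j = 1 ∨ s j = 2) → ∀ i : ZMod N,
      Dtil qs q01 x y m s i + Etil Qs Q01 x y m s i
          + Ftil fs f1s fs1 f10s fs01 x y m s i
        = (a + b * theta m (i - 1) 0 + c * theta m (i - 1) 1)
          - (a + b * theta m i 0 + c * theta m i 1)) :
    x = qs / fs
    ∧ y = (1 + Qs / fs) / (1 + q01 + Qs / fs * (1 + Q01))
    ∧ f1s = x / (1 + x) - x / (1 + x) * (Qs / qs) - 1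
    ∧ fs1 = 1 / (1 + x) + x / (1 + x) * (Qs / qs) - 1
    ∧ f10s = 1 / (1 + x) * (1 + q01) + x / (1 + x) * (Qs / qs) * (1 + Q01)
        - 1 / (1 + x) - x / (1 + x) * (Qs / qs)
    ∧ fs01 = x / (1 + x) * (1 + q01) - x / (1 + x) * (Qs / qs) * (1 + Q01)
        - x / (1 + x) + x / (1 + x) * (Qs / qs)
    ∧ b = -(qs + x * Qs) / (1 + x)
    ∧ c = (qs * q01 + x * Qs * Q01) / (1 + x) := by
  have hN2 : Fact (1 < N) := ⟨by omega⟩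
  have hi : (0 : ZMod N) - 1 ≠ 0 := by
    rw [zero_sub]; exact neg_ne_zero.mpr one_ne_zero
  have hi' : (0 : ZMod N) ≠ 0 - 1 := hi.symm
  have E1 : fs * x = qs := by
    have h := hdiv (fun j => (2:ℕ)) (fun j => (1:ℕ)) (fun _ => Or.inl rfl) 0
    unfold Dtil Etil Ftil at h
    simp only [mul_div_assoc] at h
    rw [ratio_mjump_sflip hx hy hi, ratio_mjump hx hy hi, ratio_sflip hx hy hi] at h
    norm_num [Real.rpow_neg_one, qrate, Qrate, frate, theta, mjump, sflip, Function.update, hi, hi'] at h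
    linear_combination h
  have E2 : fs * x * (1 + f1s) = b + qs := by
    have h := hdiv (fun j => if j = (0:ZMod N) - 1 then 0 else 2) (fun j => (1:ℕ)) (fun _ => Or.inl rfl) 0
    unfold Dtil Etil Ftil at h
    simp only [mul_div_assoc] at h
    rw [ratio_mjump_sflip hx hy hi, ratio_mjump hx hy hi, ratio_sflip hx hy hi] at h
    norm_num [Real.rpow_neg_one, qrate, Qrate, frate, theta, mjump, sflip, Function.update, hi, hi'] at h
    linear_combination h
  have E3 : fs * x * (1 + fs1) = -b := by
    have h := hdiv (fun j => if j = (0:ZMod N) then 0 else 2) (fun j => (1:ℕ)) (fun _ => Or.inl rfl) 0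
    unfold Dtil Etil Ftil at h
    simp only [mul_div_assoc] at h
    rw [ratio_mjump_sflip hx hy hi, ratio_mjump hx hy hi, ratio_sflip hx hy hi] at h
    norm_num [Real.rpow_neg_one, qrate, Qrate, frate, theta, mjump, sflip, Function.update, hi, hi'] at h
    linear_combination h
  have E4 : fs * x * (1 + f10s) = c + qs := by
    have h := hdiv (fun j => if j = (0:ZMod N) - 1 then 1 else 2) (fun j => (1:ℕ)) (fun _ => Or.inl rfl) 0
    unfold Dtil Etil Ftil at h
    simp only [mul_div_assoc] at h
    rw [ratio_mjump_sflip hx hy hi, ratio_mjump hx hy hi, ratio_sflip hx hy hi] at h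
    norm_num [Real.rpow_neg_one, qrate, Qrate, frate, theta, mjump, sflip, Function.update, hi, hi'] at h
    linear_combination h
  have E5 : fs * x * (1 + fs01) = qs * (1 + q01) - c := by
    have h := hdiv (fun j => if j = (0:ZMod N) then 1 else 2) (fun j => (1:ℕ)) (fun _ => Or.inl rfl) 0
    unfold Dtil Etil Ftil at h
    simp only [mul_div_assoc] at h
    rw [ratio_mjump_sflip hx hy hi, ratio_mjump hx hy hi, ratio_sflip hx hy hi] at h
    norm_num [Real.rpow_neg_one, qrate, Qrate, frate, theta, mjump, sflip, Function.update, hi, hi'] at h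
    linear_combination h
  have E7 : -Qs - fs * (1 + f1s) = b := by
    have h := hdiv (fun j => if j = (0:ZMod N) - 1 then 0 else 2) (fun j => if j = (0:ZMod N) then 2 else 1) (fun j => by by_cases h : j = 0 <;> simp [h]) 0
    unfold Dtil Etil Ftil at h
    simp only [mul_div_assoc] at h
    rw [ratio_mjump_sflip hx hy hi, ratio_mjump hx hy hi, ratio_sflip hx hy hi] at h
    norm_num [Real.rpow_neg_one, qrate, Qrate, frate, theta, mjump, sflip, Function.update, hi, hi'] at h
    linear_combination h
  have E8 : qs * (1 + q01) * y + Qs * (1 + Q01) * y * x = (-b + fs * (1 + fs1)) * x := by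
    have h := hdiv (fun j => if j = (0:ZMod N) then 0 else 2) (fun j => if j = (0:ZMod N) then 2 else 1) (fun j => by by_cases h : j = 0 <;> simp [h]) 0
    unfold Dtil Etil Ftil at h
    simp only [mul_div_assoc] at h
    rw [ratio_mjump_sflip hx hy hi, ratio_mjump hx hy hi, ratio_sflip hx hy hi] at h
    norm_num [Real.rpow_neg_one, qrate, Qrate, frate, theta, mjump, sflip, Function.update, hi, hi'] at h
    field_simp at h
    linear_combination h
  have E9 : qs + Qs * x - Qs * x * y = (c + fs * (1 + f10s)) * x * y := by
    have h := hdiv (fun j => if j = (0:ZMod N) - 1 then 1 else 2) (fun j => if j = (0:ZMod N) then 2 else 1) (fun j => by by_cases h : j = 0 <;> simp [h]) 0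
    unfold Dtil Etil Ftil at h
    simp only [mul_div_assoc] at h
    rw [ratio_mjump_sflip hx hy hi, ratio_mjump hx hy hi, ratio_sflip hx hy hi] at h
    norm_num [Real.rpow_neg_one, qrate, Qrate, frate, theta, mjump, sflip, Function.update, hi, hi'] at h
    field_simp at h
    exact mul_right_cancel₀ (ne_of_gt hy)
      (show (qs + Qs * x - Qs * x * y) * y = (c + fs * (1 + f10s)) * x * y * y by
        linear_combination y * h)
  have hf0 : fs ≠ 0 := ne_of_gt hf
  have hx0 : x ≠ 0 := ne_of_gt hx
  have h1x : (1:ℝ) + x ≠ 0 := by positivity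
  have hq2 : qs = fs * x := E1.symm
  subst hq2
  have hb' : b * (1 + x) = -(fs * x + x * Qs) := by
    linear_combination (-x) * E7 - E2
  have hyD : y * (fs * (1 + q01) + Qs * (1 + Q01)) = fs + Qs := by
    apply mul_left_cancel₀ hx0
    linear_combination E8 + E3 - hb'
  have hc : c * (1 + x) = x * (fs * q01 + Qs * Q01) := by
    have hfQ : fs + Qs ≠ 0 := by positivity
    apply mul_left_cancel₀ hfQ
    linear_combination (-(fs * (1 + q01) + Qs * (1 + Q01))) * E9
      - (fs * (1 + q01) + Qs * (1 + Q01)) * y * E4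
      - (c * (1 + x) + x * (Qs + fs)) * hyD
  have hA : (0:ℝ) < 1 + q01 := by linarith
  have hB : (0:ℝ) < 1 + Q01 := by linarith
  have hden : (0:ℝ) < 1 + q01 + Qs / fs * (1 + Q01) := by positivity
  have hf1s : f1s * (fs * x * (1 + x)) = -(fs * x + x * Qs) := by
    linear_combination (1 + x) * E2 + hb'
  have hfs1 : fs1 * (fs * x * (1 + x)) = x * Qs - fs * x * x := by
    linear_combination (1 + x) * E3 - hb'
  have hf10s : f10s * (fs * x * (1 + x)) = x * (fs * q01 + Qs * Q01) := by
    linear_combination (1 + x) * E4 + hc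
  have hfs01 : fs01 * (fs * x * (1 + x)) = x * (fs * q01 * x - Qs * Q01) := by
    linear_combination (1 + x) * E5 - hc
  have hfxx : fs * x * (1 + x) ≠ 0 := mul_ne_zero (mul_ne_zero hf0 hx0) h1x
  refine ⟨(mul_div_cancel_left₀ x hf0).symm, ?_, ?_, ?_, ?_, ?_, ?_, ?_⟩
  · field_simp
    linear_combination hyD
  · rw [(eq_div_iff hfxx).mpr hf1s]
    field_simp
    ring
  · rw [(eq_div_iff hfxx).mpr hfs1]
    field_simp
    ring
  · rw [(eq_div_iff hfxx).mpr hf10s]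
    field_simp
    ring
  · rw [(eq_div_iff hfxx).mpr hfs01]
    field_simp
    ring
  · rw [eq_div_iff h1x]
    linear_combination hb'
  · rw [eq_div_iff h1x]
    linear_combination hc
end

section
/- Explicit fugacity: for y > 1 and 0 < ρ_p < 1, the number z₀ = 1 − (1 − √(1 − 4·ρ_p·(1−ρ_p)·(1 − 1/y))) / (2·(1−ρ_p)·(1 − 1/y)) is well defined (the expression under the square root is positive), satisfies the quadratic equation (y−1)·z₀² + z₀·( y·ρ_p/(1−ρ_p) − y + 2 ) − 1 = 0, lies in the open interval (0, 1), and is the unique solution of that quadratic equation in the interval [0, 1). -/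
theorem fug_aux (y ρ s : ℝ) (hc : (1:ℝ) - ρ ≠ 0) (hy : y ≠ 0) (hy1 : y - 1 ≠ 0)
    (hs2 : y * s^2 = y - 4*ρ*(1-ρ)*(y-1)) :
    (y - 1) * (1 - (1 - s) / (2 * (1 - ρ) * (1 - 1/y))) ^ 2
      + (1 - (1 - s) / (2 * (1 - ρ) * (1 - 1/y))) * (y * ρ / (1 - ρ) - y + 2) - 1 = 0 := by
  have ha : (1:ℝ) - 1/y ≠ 0 := by
    intro h
    apply hy1
    have : 1/y = 1 := by linarith
    field_simp at this
    linarith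
  field_simp
  linear_combination (2*y*(1-ρ)^2*(y-1)^2 + y*(4*ρ-2*ρ^2-1) + y^2*(4*ρ^2-8*ρ+4) + y^3*(4*ρ-2*ρ^2-2)) * hs2


/-- explicit fugacity. For `y > 1` and `0 < ρ_p < 1`, the number
`z₀ = 1 − (1 − √(1 − 4ρ_p(1−ρ_p)(1−1/y)))/(2(1−ρ_p)(1−1/y))` is well defined
(the radicand is positive), solves the fugacity quadratic, lies in `(0,1)`, and
is the unique root of the quadratic in `[0,1)`. -/
theorem explicit_fugacity (y ρp : ℝ) (hy : 1 < y) (hρ0 : 0 < ρp) (hρ1 : ρp < 1) :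
    0 < 1 - 4 * ρp * (1 - ρp) * (1 - 1 / y)
    ∧ (y - 1) * (1 - (1 - Real.sqrt (1 - 4 * ρp * (1 - ρp) * (1 - 1 / y)))
          / (2 * (1 - ρp) * (1 - 1 / y))) ^ 2
        + (1 - (1 - Real.sqrt (1 - 4 * ρp * (1 - ρp) * (1 - 1 / y)))
          / (2 * (1 - ρp) * (1 - 1 / y))) * (y * ρp / (1 - ρp) - y + 2) - 1 = 0
    ∧ 0 < 1 - (1 - Real.sqrt (1 - 4 * ρp * (1 - ρp) * (1 - 1 / y)))
          / (2 * (1 - ρp) * (1 - 1 / y))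
    ∧ 1 - (1 - Real.sqrt (1 - 4 * ρp * (1 - ρp) * (1 - 1 / y)))
          / (2 * (1 - ρp) * (1 - 1 / y)) < 1
    ∧ ∀ z : ℝ, 0 ≤ z → z < 1 →
        (y - 1) * z ^ 2 + z * (y * ρp / (1 - ρp) - y + 2) - 1 = 0 →
        z = 1 - (1 - Real.sqrt (1 - 4 * ρp * (1 - ρp) * (1 - 1 / y)))
          / (2 * (1 - ρp) * (1 - 1 / y)) := by
  have hy0 : (0:ℝ) < y := by linarith
  have hc : (0:ℝ) < 1 - ρp := by linarith
  have hiy0 : 0 < 1/y := by positivity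
  have hiy1 : 1/y < 1 := by rw [div_lt_one hy0]; linarith
  have ha : (0:ℝ) < 1 - 1/y := by linarith
  have hD : 0 < 1 - 4 * ρp * (1 - ρp) * (1 - 1 / y) := by
    nlinarith [sq_nonneg (2*ρp - 1), mul_pos (mul_pos hρ0 hc) hiy0]
  have hD1 : 1 - 4 * ρp * (1 - ρp) * (1 - 1 / y) < 1 := by
    nlinarith [mul_pos (mul_pos hρ0 hc) ha]
  set s := Real.sqrt (1 - 4 * ρp * (1 - ρp) * (1 - 1 / y)) with hs_def
  have hs0 : 0 < s := Real.sqrt_pos.mpr hD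
  have hs2 : s^2 = 1 - 4 * ρp * (1 - ρp) * (1 - 1 / y) := Real.sq_sqrt hD.le
  have hs1 : s < 1 := by nlinarith
  have hb : 0 < 2 * (1 - ρp) * (1 - 1/y) := by positivity
  have hs2' : y * s^2 = y - 4*ρp*(1-ρp)*(y-1) := by
    rw [hs2]; field_simp
  have hquad := fug_aux y ρp s (by linarith) (by linarith) (by linarith) hs2'
  have hpos : 0 < 1 - (1 - s) / (2 * (1 - ρp) * (1 - 1 / y)) := by
    rw [sub_pos, div_lt_one hb]
    nlinarith [mul_pos (mul_pos hc hc) (mul_pos ha hiy0),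
      sq_nonneg (s - 1 + 2 * (1 - ρp) * (1 - 1/y)), sq_nonneg (s + 1 - 2 * (1 - ρp) * (1 - 1/y))]
  have hlt : 1 - (1 - s) / (2 * (1 - ρp) * (1 - 1 / y)) < 1 := by
    have : 0 < (1 - s) / (2 * (1 - ρp) * (1 - 1 / y)) := div_pos (by linarith) hb
    linarith
  refine ⟨hD, hquad, hpos, hlt, ?_⟩
  intro z hz0 hz1 hzq
  set z₀ := 1 - (1 - s) / (2 * (1 - ρp) * (1 - 1 / y)) with hz₀_def
  by_contra hne
  have hfac : (z - z₀) * ((y - 1) * (z + z₀) + (y * ρp / (1 - ρp) - y + 2)) = 0 := by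
    linear_combination hzq - hquad
  rcases mul_eq_zero.mp hfac with h | hsum
  · exact hne (by linarith [sub_eq_zero.mp h])
  · have hprod : (y - 1) * (z * z₀) = -1 := by
      linear_combination z * hsum - hzq
    nlinarith [mul_nonneg hz0 hpos.le]
end

section
/- Closed form of the stationary particle current: with x = q⋆/f⋆, y = (1 + Q⋆/f⋆)/(1 + q⋆01 + (Q⋆/f⋆)(1 + Q⋆01)), A = q⋆·(f⋆ + Q⋆)/(f⋆ + q⋆), P₀ = (1−z)/(1+(y−1)·z), ⟨θ¹⟩ = y·P₀·z and ⟨θ^{>1}⟩ = 1 − P₀ − ⟨θ¹⟩, the averaged current expression satisfies (1/(1+x))·( q⋆·(1+q⋆01)·⟨θ¹⟩ + q⋆·⟨θ^{>1}⟩ ) + (x/(1+x))·( Q⋆·(1+Q⋆01)·⟨θ¹⟩ + Q⋆·⟨θ^{>1}⟩ ) = A·z. Consequently the stationary particle current is j_p = A·ρ_p·z. -/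
/-- closed form of the stationary particle current. With
`x = q⋆/f⋆`, `y` the interaction strength, `A = q⋆(f⋆+Q⋆)/(f⋆+q⋆)`,
`P₀ = (1−z)/(1+(y−1)z)`, `⟨θ¹⟩ = y·P₀·z` and `⟨θ^{>1}⟩ = 1 − P₀ − ⟨θ¹⟩`, the
averaged current expression equals `A·z`; consequently `j_p = A·ρ_p·z`. -/
theorem stationary_current_closed_form
    (qs Qs fs q01 Q01 : ℝ)
    (hq : 0 < qs) (hQ : 0 < Qs) (hf : 0 < fs)
    (hq01 : -1 < q01) (hQ01 : -1 < Q01)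
    (hpos : 0 < 1 + q01 + Qs / fs * (1 + Q01))
    (z : ℝ) (hz0 : 0 ≤ z) (hz1 : z < 1)
    (x y A P0 θ1 θg : ℝ)
    (hx : x = qs / fs)
    (hy : y = (1 + Qs / fs) / (1 + q01 + Qs / fs * (1 + Q01)))
    (hA : A = qs * (fs + Qs) / (fs + qs))
    (hP0 : P0 = (1 - z) / (1 + (y - 1) * z))
    (hθ1 : θ1 = y * P0 * z)
    (hθg : θg = 1 - P0 - θ1) :
    1 / (1 + x) * (qs * (1 + q01) * θ1 + qs * θg)
        + x / (1 + x) * (Qs * (1 + Q01) * θ1 + Qs * θg)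
      = A * z
    ∧ ∀ ρp : ℝ,
        ρp * (1 / (1 + x) * (qs * (1 + q01) * θ1 + qs * θg)
            + x / (1 + x) * (Qs * (1 + Q01) * θ1 + Qs * θg))
          = A * ρp * z := by
  set E : ℝ := fs * q01 + Qs * Q01 with hE
  set G : ℝ := fs + Qs + E with hGdef
  have hfs : fs ≠ 0 := ne_of_gt hf
  have hG : 0 < G := by
    have : G = fs * (1 + q01 + Qs / fs * (1 + Q01)) := by
      field_simp [hGdef, hE]; ring
    rw [this]; exact mul_pos hf hpos
  have hGne : G ≠ 0 := ne_of_gt hG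
  have hy' : y = (fs + Qs) / G := by
    rw [hy]
    rw [div_eq_div_iff (ne_of_gt hpos) hGne]
    field_simp [hGdef, hE]
    ring_nf
    rw [hGdef, hE]; ring
  have hw : 1 + (y - 1) * z = (G - E * z) / G := by
    rw [hy']; field_simp [hGdef]; ring
  have hy0 : 0 < y := by
    rw [hy']; positivity
  have hden : (0:ℝ) < 1 + (y - 1) * z := by nlinarith
  have hGE : 0 < G - E * z := by
    have := hden; rw [hw] at this
    by_contra h
    push_neg at h
    have : (G - E * z) / G ≤ 0 := div_nonpos_of_nonpos_of_nonneg h hG.le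
    linarith [hden, hw ▸ this]
  have hGEne : G - E * z ≠ 0 := ne_of_gt hGE
  have hP0' : P0 = (1 - z) * G / (G - E * z) := by
    rw [hP0, hw]; field_simp
  have hθ1' : θ1 = (fs + Qs) * (1 - z) * z / (G - E * z) := by
    rw [hθ1, hy', hP0']; field_simp
  have hfq : (0:ℝ) < fs + qs := by positivity
  have hfqne : fs + qs ≠ 0 := ne_of_gt hfq
  have hx1 : 1 + x = (fs + qs) / fs := by rw [hx]; field_simp
  have hx1ne : 1 + x ≠ 0 := by rw [hx1]; positivity
  have main : 1 / (1 + x) * (qs * (1 + q01) * θ1 + qs * θg)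
        + x / (1 + x) * (Qs * (1 + Q01) * θ1 + Qs * θg) = A * z := by
    clear_value E G
    rw [hθg, hθ1', hP0', hA, hx]
    generalize hD : G - E * z = D at *
    have hG2 : G = D + E * z := by rw [← hD]; ring
    rw [hG2]
    field_simp
    rw [← hD, hGdef, hE]
    ring
  exact ⟨main, fun ρp => by rw [main]; ring⟩
end
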